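/- The set K = q({[t] : t ∈ ℝ, 0 < t < 2}) ⊆ X is nonempty, open in X, compact, and Hausdorff in the subspace topology. -/

import Mathlib

/-- The additive circle `ℝ/3ℤ`. -/
abbrev CircleThree : Type := AddCircle (3 : ℝ)

/-- The relation `r` on `C = ℝ/3ℤ`: `r x y` iff `x = y`, or there is `t ∈ (0,1)`
with (`x = [t]` and `y = [t+1]`) or (`x = [t+1]` and `y = [t]`). -/
def relAabAb (x y : CircleThree) : Prop :=
  x = y ∨ ∃ t : ℝ, 0 < t ∧ t < 1 ∧
    ((x = (t : CircleThree) ∧ y = ((t + 1 : ℝ) : CircleThree)) ∨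
     (x = ((t + 1 : ℝ) : CircleThree) ∧ y = (t : CircleThree)))

/-- The subset `K = q({[t] : 0 < t < 2})` of `X = C/r`. -/
def Kset : Set (Quot relAabAb) :=
  Quot.mk relAabAb '' ((fun t : ℝ => (t : CircleThree)) '' Set.Ioo 0 2)

/-! The arc `(0, 2)` of `C` contains every point that `r` identifies with another one, so it is
saturated and `K` is open. `K` is already the image of the compact arc `[1/2, 3/2]`. Reduction
modulo `1` respects `r` and, on `(0, 2)`, identifies exactly the points identified by `r`, so it
injects `K` continuously into the Hausdorff circle `ℝ/ℤ`. -/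

theorem Quot.mk_preimage_image_mk_of_respects {α : Type*} {r : α → α → Prop} {s : Set α}
    (hs : ∀ a b, r a b → (a ∈ s ↔ b ∈ s)) : Quot.mk r ⁻¹' (Quot.mk r '' s) = s := by
  refine Set.Subset.antisymm ?_ (Set.subset_preimage_image _ _)
  rintro a ⟨b, hb, hba⟩
  have hmem : (b ∈ s) = (a ∈ s) :=
    congrArg (Quot.lift (· ∈ s) fun a b h => propext (hs a b h)) hba
  exact hmem ▸ hb

namespace Kset

local notation "q" => Quot.mk relAabAb

lemma mk_coe_eq_mk_coe_add_one {t : ℝ} (h0 : 0 < t) (h1 : t < 1) :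
    q (t : CircleThree) = q ((t + 1 : ℝ) : CircleThree) :=
  Quot.sound (Or.inr ⟨t, h0, h1, Or.inl ⟨rfl, rfl⟩⟩)

lemma relAabAb_respects_arc (a b : CircleThree) (hab : relAabAb a b) :
    a ∈ (fun t : ℝ => (t : CircleThree)) '' Set.Ioo 0 2 ↔
      b ∈ (fun t : ℝ => (t : CircleThree)) '' Set.Ioo 0 2 := by
  have mem_arc : ∀ {t : ℝ}, 0 < t → t < 1 →
      (t : CircleThree) ∈ (fun t : ℝ => (t : CircleThree)) '' Set.Ioo 0 2 ∧
      ((t + 1 : ℝ) : CircleThree) ∈ (fun t : ℝ => (t : CircleThree)) '' Set.Ioo 0 2 :=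
    fun h0 h1 => ⟨⟨_, ⟨h0, by linarith⟩, rfl⟩, ⟨_, ⟨by linarith, by linarith⟩, rfl⟩⟩
  rcases hab with rfl | ⟨t, h0, h1, ⟨rfl, rfl⟩ | ⟨rfl, rfl⟩⟩
  · rfl
  · exact iff_of_true (mem_arc h0 h1).1 (mem_arc h0 h1).2
  · exact iff_of_true (mem_arc h0 h1).2 (mem_arc h0 h1).1

lemma isOpen : IsOpen Kset := by
  rw [← isQuotientMap_quot_mk.isOpen_preimage, Kset,
    Quot.mk_preimage_image_mk_of_respects relAabAb_respects_arc]
  exact QuotientAddGroup.isOpenMap_coe _ isOpen_Ioo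

lemma eq_image_Icc :
    Kset = q '' ((fun t : ℝ => (t : CircleThree)) '' Set.Icc (1 / 2) (3 / 2)) := by
  refine Set.Subset.antisymm ?_
    (Set.image_mono (Set.image_mono fun t ht => ⟨by linarith [ht.1], by linarith [ht.2]⟩))
  rintro _ ⟨_, ⟨t, ⟨h0, h2⟩, rfl⟩, rfl⟩
  rcases lt_or_ge t (1 / 2) with hlt | hge
  · exact ⟨_, ⟨t + 1, ⟨by linarith, by linarith⟩, rfl⟩,
      (mk_coe_eq_mk_coe_add_one h0 (by linarith)).symm⟩
  rcases le_or_gt t (3 / 2) with hle | hgt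
  · exact ⟨_, ⟨t, ⟨hge, hle⟩, rfl⟩, rfl⟩
  · refine ⟨_, ⟨t - 1, ⟨by linarith, by linarith⟩, rfl⟩, ?_⟩
    simpa using mk_coe_eq_mk_coe_add_one (t := t - 1) (by linarith) (by linarith)

lemma isCompact : IsCompact Kset := by
  rw [eq_image_Icc]
  exact (isCompact_Icc.image (AddCircle.continuous_mk' 3)).image continuous_quot_mk

noncomputable def reduceModOne : CircleThree →+ AddCircle (1 : ℝ) :=
  QuotientAddGroup.map _ _ (AddMonoidHom.id ℝ) <| AddSubgroup.zmultiples_le_of_mem <|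
    AddSubgroup.mem_zmultiples_iff.mpr ⟨3, by norm_num⟩

lemma reduceModOne_coe (t : ℝ) : reduceModOne (t : CircleThree) = (t : AddCircle (1 : ℝ)) :=
  rfl

lemma continuous_reduceModOne : Continuous reduceModOne := by
  rw [(QuotientAddGroup.isQuotientMap_mk _).continuous_iff]
  exact AddCircle.continuous_mk' 1

noncomputable def quotReduceModOne : Quot relAabAb → AddCircle (1 : ℝ) :=
  Quot.lift reduceModOne <| by
    rintro a b (rfl | ⟨t, -, -, ⟨rfl, rfl⟩ | ⟨rfl, rfl⟩⟩) <;>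
      simp only [reduceModOne_coe, AddCircle.coe_add_period]

lemma continuous_quotReduceModOne : Continuous quotReduceModOne :=
  continuous_quot_lift _ continuous_reduceModOne

lemma mk_coe_eq_of_coe_eq_modOne {t s : ℝ} (ht : t ∈ Set.Ioo 0 2) (hs : s ∈ Set.Ioo 0 2)
    (h : (t : AddCircle (1 : ℝ)) = s) : q (t : CircleThree) = q (s : CircleThree) := by
  wlog hts : t ≤ s generalizing t s
  · exact (this hs ht h.symm (by linarith)).symm
  obtain ⟨k, hk⟩ := AddSubgroup.mem_zmultiples_iff.mp (QuotientAddGroup.eq_iff_sub_mem.mp h.symm)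
  rw [zsmul_one] at hk
  have hk0 : (0 : ℤ) ≤ k := by exact_mod_cast (show (0 : ℝ) ≤ k by linarith)
  have hk2 : k < 2 := by exact_mod_cast (show (k : ℝ) < 2 by linarith [ht.1, hs.2])
  interval_cases k
  · rw [show s = t by push_cast at hk; linarith]
  · obtain rfl : s = t + 1 := by push_cast at hk; linarith
    exact mk_coe_eq_mk_coe_add_one ht.1 (by linarith [hs.2])

lemma injOn_quotReduceModOne : Set.InjOn quotReduceModOne Kset := by
  rintro _ ⟨_, ⟨t, ht, rfl⟩, rfl⟩ _ ⟨_, ⟨s, hs, rfl⟩, rfl⟩ h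
  exact mk_coe_eq_of_coe_eq_modOne ht hs h

lemma t2Space : T2Space Kset :=
  T2Space.of_injective_continuous injOn_quotReduceModOne.injective
    continuous_quotReduceModOne.continuousOn.domRestrict

end Kset

theorem stmt_4 :
    Kset.Nonempty ∧ IsOpen Kset ∧ IsCompact Kset ∧ T2Space ↥Kset :=
  ⟨⟨_, _, ⟨1, ⟨one_pos, one_lt_two⟩, rfl⟩, rfl⟩, Kset.isOpen, Kset.isCompact, Kset.t2Space⟩
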